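/- arXiv:2012.09293 — 2 statements merged into one kernel-verified Lean document; each statement's English description precedes it below -/
import Mathlib

section
/- Under the hypotheses of the preceding closed-loop stability theorem (plant x(k+1) = A_G x(k) + B_G u(k); NN controller in LFT form with well-posedness map w and nonlinearity φ satisfying the local sector conditions on X; positive definite P and λ ≥ 0 satisfying the negative-definite Lyapunov LMI and the block positive-semidefiniteness conditions [[h_i², H_iᵀ], [H_i, P]] ⪰ 0), every trajectory starting from x₀ ∈ E(P) satisfies the safety condition x(k) ∈ X for all k ≥ 0, where X = {x ∈ ℝⁿ : |H_iᵀ x| ≤ h_i for i = 1,…,n_X}. -/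
/-!
Nonnegativity of the quadratic form of `[[h_i², H_iᵀ], [H_i, P]]` at `(t, x)` for every `t`
forces `(H_iᵀ x)² ≤ h_i² · xᵀ P x` (a discriminant bound), so the ellipsoid `E(P)` lies in the
safe set `X`. On `X` the activation inputs stay in the box where the sector conditions hold, so
evaluating the Lyapunov LMI at `(x, w(x))` (S-procedure) shows that `xᵀ P x` does not increase
along the closed loop. Hence `E(P)` is forward invariant, and every trajectory starting in it
stays in `X`.
-/

open Matrix Set

section

variable {n m p : Type*} [Fintype n] [Fintype m] [Fintype p]

theorem sumElim_dotProduct_fromBlocks_bordered (P : Matrix n n ℝ) (H x : n → ℝ) (c t : ℝ) :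
    ((fun _ : Fin 1 => t) ⊕ᵥ x) ⬝ᵥ
        fromBlocks !![c] (of fun (_ : Fin 1) j => H j) (of fun j (_ : Fin 1) => H j) P *ᵥ
          ((fun _ : Fin 1 => t) ⊕ᵥ x)
      = c * (t * t) + 2 * (H ⬝ᵥ x) * t + x ⬝ᵥ P *ᵥ x := by
  have hcol : (of fun j (_ : Fin 1) => H j) *ᵥ (fun _ => t) = t • H := by
    ext j; simp [mulVec, dotProduct, mul_comm]
  have hrow : (of fun (_ : Fin 1) j => H j) *ᵥ x = fun _ => H ⬝ᵥ x := rfl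
  simp only [fromBlocks_mulVec, sumElim_dotProduct_sumElim, Sum.elim_comp_inl, Sum.elim_comp_inr,
    hcol, hrow, dotProduct_add, dotProduct_smul, smul_eq_mul, dotProduct_comm x H]
  simp only [dotProduct, Finset.univ_unique, Fin.default_eq_zero, Fin.isValue, mulVec, of_apply,
    cons_val', cons_val_fin_one, Finset.sum_const, Finset.card_singleton, one_smul]
  ring

theorem sq_dotProduct_le_of_posSemidef_fromBlocks {P : Matrix n n ℝ} {H : n → ℝ} {c : ℝ}
    (hM : (fromBlocks !![c] (of fun (_ : Fin 1) j => H j) (of fun j (_ : Fin 1) => H j)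
      P).PosSemidef)
    (x : n → ℝ) : (H ⬝ᵥ x) ^ 2 ≤ c * (x ⬝ᵥ P *ᵥ x) := by
  have hquad : ∀ t, 0 ≤ c * (t * t) + 2 * (H ⬝ᵥ x) * t + x ⬝ᵥ P *ᵥ x := fun t => by
    simpa [sumElim_dotProduct_fromBlocks_bordered] using
      hM.dotProduct_mulVec_nonneg ((fun _ => t) ⊕ᵥ x)
  have hdiscrim := discrim_le_zero hquad
  rw [discrim] at hdiscrim
  linarith

def ellipsoid (P : Matrix n n ℝ) : Set (n → ℝ) := {x | x ⬝ᵥ P *ᵥ x ≤ 1}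

theorem abs_dotProduct_le_of_mem_ellipsoid {P : Matrix n n ℝ} {H : n → ℝ} {h : ℝ} (hh : 0 ≤ h)
    (hM : (fromBlocks !![h ^ 2] (of fun (_ : Fin 1) j => H j) (of fun j (_ : Fin 1) => H j)
      P).PosSemidef)
    {x : n → ℝ} (hx : x ∈ ellipsoid P) : |H ⬝ᵥ x| ≤ h := by
  refine abs_le_of_sq_le_sq ?_ hh
  calc (H ⬝ᵥ x) ^ 2 ≤ h ^ 2 * (x ⬝ᵥ P *ᵥ x) := sq_dotProduct_le_of_posSemidef_fromBlocks hM x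
    _ ≤ h ^ 2 := mul_le_of_le_one_right (sq_nonneg h) hx

theorem dotProduct_transpose_mul_mul_mulVec (R : Matrix m n ℝ) (M : Matrix m m ℝ) (z : n → ℝ) :
    z ⬝ᵥ (Rᵀ * M * R) *ᵥ z = R *ᵥ z ⬝ᵥ M *ᵥ (R *ᵥ z) := by
  rw [Matrix.mul_assoc, ← mulVec_mulVec, dotProduct_transpose_mulVec, ← mulVec_mulVec,
    dotProduct_comm]

theorem sumElim_dotProduct_fromBlocks_lyapunov (A : Matrix n n ℝ) (B : Matrix n m ℝ)
    (P : Matrix n n ℝ) (x : n → ℝ) (u : m → ℝ) :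
    (x ⊕ᵥ u) ⬝ᵥ fromBlocks (Aᵀ * P * A - P) (Aᵀ * P * B) (Bᵀ * P * A) (Bᵀ * P * B) *ᵥ (x ⊕ᵥ u)
      = (A *ᵥ x + B *ᵥ u) ⬝ᵥ P *ᵥ (A *ᵥ x + B *ᵥ u) - x ⬝ᵥ P *ᵥ x := by
  simp only [fromBlocks_mulVec, sumElim_dotProduct_sumElim, sub_mulVec, mulVec_add, dotProduct_add,
    add_dotProduct, dotProduct_sub, Matrix.mul_assoc, ← mulVec_mulVec, dotProduct_mulVec (v := x),
    dotProduct_mulVec (v := u), vecMul_transpose, Sum.elim_comp_inl, Sum.elim_comp_inr]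
  ring

theorem sumElim_dotProduct_fromBlocks_sector [DecidableEq p] (α β lam v q : p → ℝ) :
    (v ⊕ᵥ q) ⬝ᵥ fromBlocks
        ((-2 : ℝ) • (diagonal α * diagonal β * diagonal lam))
        ((diagonal α + diagonal β) * diagonal lam)
        ((diagonal α + diagonal β) * diagonal lam) ((-2 : ℝ) • diagonal lam) *ᵥ (v ⊕ᵥ q)
      = ∑ i, 2 * lam i * ((q i - α i * v i) * (β i * v i - q i)) := by
  simp only [fromBlocks_mulVec, sumElim_dotProduct_sumElim, Sum.elim_comp_inl, Sum.elim_comp_inr]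
  simp only [dotProduct, mulVec_diagonal, diagonal_mul_diagonal, Matrix.add_mul, add_mulVec,
    smul_mulVec, Pi.add_apply, Pi.smul_apply, smul_eq_mul, ← Finset.sum_add_distrib]
  exact Finset.sum_congr rfl fun i _ => by ring

theorem quadraticForm_closedLoop_le_of_lmi [DecidableEq n] [DecidableEq p] {A : Matrix n n ℝ}
    {B : Matrix n m ℝ} {P : Matrix n n ℝ} {Nux : Matrix m n ℝ} {Nuw : Matrix m p ℝ}
    {Nvx : Matrix p n ℝ} {Nvw : Matrix p p ℝ} {α β lam : p → ℝ} (hlam : ∀ i, 0 ≤ lam i)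
    (hLMI : ∀ z : n ⊕ p → ℝ, z ≠ 0 →
      z ⬝ᵥ ((fromBlocks 1 0 Nux Nuw : Matrix (n ⊕ m) (n ⊕ p) ℝ)ᵀ *
              fromBlocks (Aᵀ * P * A - P) (Aᵀ * P * B) (Bᵀ * P * A) (Bᵀ * P * B) *
              (fromBlocks 1 0 Nux Nuw : Matrix (n ⊕ m) (n ⊕ p) ℝ) +
            (fromBlocks Nvx Nvw 0 1 : Matrix (p ⊕ p) (n ⊕ p) ℝ)ᵀ *
              fromBlocks ((-2 : ℝ) • (diagonal α * diagonal β * diagonal lam))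
                ((diagonal α + diagonal β) * diagonal lam)
                ((diagonal α + diagonal β) * diagonal lam) ((-2 : ℝ) • diagonal lam) *
              (fromBlocks Nvx Nvw 0 1 : Matrix (p ⊕ p) (n ⊕ p) ℝ)) *ᵥ z < 0)
    {x : n → ℝ} {w : p → ℝ}
    (hsector : ∀ i, 0 ≤ (w i - α i * (Nvx *ᵥ x + Nvw *ᵥ w) i) *
      (β i * (Nvx *ᵥ x + Nvw *ᵥ w) i - w i)) :
    (A *ᵥ x + B *ᵥ (Nux *ᵥ x + Nuw *ᵥ w)) ⬝ᵥ P *ᵥ (A *ᵥ x + B *ᵥ (Nux *ᵥ x + Nuw *ᵥ w))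
      ≤ x ⬝ᵥ P *ᵥ x := by
  by_cases hz : x ⊕ᵥ w = 0
  · obtain ⟨rfl, rfl⟩ : x = 0 ∧ w = 0 :=
      ⟨funext fun j => congrFun hz (.inl j), funext fun j => congrFun hz (.inr j)⟩
    simp
  have hRV : (fromBlocks 1 0 Nux Nuw : Matrix (n ⊕ m) (n ⊕ p) ℝ) *ᵥ (x ⊕ᵥ w)
      = x ⊕ᵥ (Nux *ᵥ x + Nuw *ᵥ w) := by
    simp [fromBlocks_mulVec]
  have hRφ : (fromBlocks Nvx Nvw 0 1 : Matrix (p ⊕ p) (n ⊕ p) ℝ) *ᵥ (x ⊕ᵥ w)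
      = (Nvx *ᵥ x + Nvw *ᵥ w) ⊕ᵥ w := by
    simp [fromBlocks_mulVec]
  have hlmi := hLMI _ hz
  rw [add_mulVec, dotProduct_add, dotProduct_transpose_mul_mul_mulVec,
    dotProduct_transpose_mul_mul_mulVec, hRV, hRφ, sumElim_dotProduct_fromBlocks_lyapunov,
    sumElim_dotProduct_fromBlocks_sector] at hlmi
  have hS : 0 ≤ ∑ i, 2 * lam i * ((w i - α i * (Nvx *ᵥ x + Nvw *ᵥ w) i) *
      (β i * (Nvx *ᵥ x + Nvw *ᵥ w) i - w i)) :=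
    Finset.sum_nonneg fun i _ => mul_nonneg (by linarith [hlam i]) (hsector i)
  linarith

end

theorem stmt_9_general (n m p nX : ℕ)
    (A_G : Matrix (Fin n) (Fin n) ℝ) (B_G : Matrix (Fin n) (Fin m) ℝ)
    (H : Fin nX → Fin n → ℝ) (h : Fin nX → ℝ) (hh : ∀ i, 0 ≤ h i)
    (Nux : Matrix (Fin m) (Fin n) ℝ) (Nuw : Matrix (Fin m) (Fin p) ℝ)
    (Nvx : Matrix (Fin p) (Fin n) ℝ) (Nvw : Matrix (Fin p) (Fin p) ℝ)
    (φ : (Fin p → ℝ) → (Fin p → ℝ))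
    (w : (Fin n → ℝ) → (Fin p → ℝ))
    (hw : ∀ x, w x = φ (Nvx.mulVec x + Nvw.mulVec (w x)))
    (u : (Fin n → ℝ) → (Fin m → ℝ))
    (hu : ∀ x, u x = Nux.mulVec x + Nuw.mulVec (w x))
    (F : (Fin n → ℝ) → (Fin n → ℝ))
    (hF : ∀ x, F x = A_G.mulVec x + B_G.mulVec (u x))
    (vlo vhi α β : Fin p → ℝ)
    -- (a) activation input bounds hold on the state constraint set X
    (ha : ∀ x : Fin n → ℝ, (∀ i, |H i ⬝ᵥ x| ≤ h i) →
      ∀ i, vlo i ≤ (Nvx.mulVec x + Nvw.mulVec (w x)) i ∧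
           (Nvx.mulVec x + Nvw.mulVec (w x)) i ≤ vhi i)
    -- (b) local sector condition for the nonlinearity
    (hb : ∀ v : Fin p → ℝ, (∀ i, vlo i ≤ v i ∧ v i ≤ vhi i) →
      ∀ i, 0 ≤ (φ v i - α i * v i) * (β i * v i - φ v i))
    (P : Matrix (Fin n) (Fin n) ℝ) (lam : Fin p → ℝ) (hlam : ∀ i, 0 ≤ lam i)
    -- (c) the Lyapunov LMI is negative definite
    (hc : ∀ z : Fin n ⊕ Fin p → ℝ, z ≠ 0 →
      z ⬝ᵥ ((Matrix.fromBlocks 1 0 Nux Nuw : Matrix (Fin n ⊕ Fin m) (Fin n ⊕ Fin p) ℝ)ᵀ *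
              (Matrix.fromBlocks (A_Gᵀ * P * A_G - P) (A_Gᵀ * P * B_G)
                (B_Gᵀ * P * A_G) (B_Gᵀ * P * B_G)) *
              (Matrix.fromBlocks 1 0 Nux Nuw : Matrix (Fin n ⊕ Fin m) (Fin n ⊕ Fin p) ℝ) +
            (Matrix.fromBlocks Nvx Nvw 0 1 : Matrix (Fin p ⊕ Fin p) (Fin n ⊕ Fin p) ℝ)ᵀ *
              (Matrix.fromBlocks
                ((-2 : ℝ) • (Matrix.diagonal α * Matrix.diagonal β * Matrix.diagonal lam))
                ((Matrix.diagonal α + Matrix.diagonal β) * Matrix.diagonal lam)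
                ((Matrix.diagonal α + Matrix.diagonal β) * Matrix.diagonal lam)
                ((-2 : ℝ) • Matrix.diagonal lam)) *
              (Matrix.fromBlocks Nvx Nvw 0 1 : Matrix (Fin p ⊕ Fin p) (Fin n ⊕ Fin p) ℝ)).mulVec z < 0)
    -- (d) the set-containment LMIs
    (hd : ∀ i, (Matrix.fromBlocks (!![(h i) ^ 2])
        (Matrix.of fun (_ : Fin 1) j => H i j)
        (Matrix.of fun j (_ : Fin 1) => H i j) P).PosSemidef) :
    -- conclusion: safety of every trajectory starting in E(P)
    ∀ x₀ : Fin n → ℝ, x₀ ⬝ᵥ P.mulVec x₀ ≤ 1 →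
      ∀ k : ℕ, ∀ i, |H i ⬝ᵥ (F^[k] x₀)| ≤ h i := by
  intro x₀ hx₀ k
  have hsafe : ∀ x ∈ ellipsoid P, ∀ i, |H i ⬝ᵥ x| ≤ h i := fun x hx i =>
    abs_dotProduct_le_of_mem_ellipsoid (hh i) (hd i) hx
  have hinv : MapsTo F (ellipsoid P) (ellipsoid P) := fun x hx => by
    have hsector := hb _ (ha x (hsafe x hx))
    rw [← hw x] at hsector
    have hle := quadraticForm_closedLoop_le_of_lmi hlam hc hsector
    rw [← hu x, ← hF x] at hle
    exact hle.trans hx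
  exact hsafe _ (hinv.iterate k hx₀)

/-- Safety: under the hypotheses of the closed-loop stability theorem, every
trajectory starting in E(P) satisfies the safety condition x(k) ∈ X for all k. -/
theorem stmt_9 (n m p nX : ℕ)
    (A_G : Matrix (Fin n) (Fin n) ℝ) (B_G : Matrix (Fin n) (Fin m) ℝ)
    (H : Fin nX → Fin n → ℝ) (h : Fin nX → ℝ) (hh : ∀ i, 0 ≤ h i)
    (Nux : Matrix (Fin m) (Fin n) ℝ) (Nuw : Matrix (Fin m) (Fin p) ℝ)
    (Nvx : Matrix (Fin p) (Fin n) ℝ) (Nvw : Matrix (Fin p) (Fin p) ℝ)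
    (φ : (Fin p → ℝ) → (Fin p → ℝ)) (hφ0 : φ 0 = 0)
    (w : (Fin n → ℝ) → (Fin p → ℝ))
    (hw : ∀ x, w x = φ (Nvx.mulVec x + Nvw.mulVec (w x))) (hw0 : w 0 = 0)
    (u : (Fin n → ℝ) → (Fin m → ℝ))
    (hu : ∀ x, u x = Nux.mulVec x + Nuw.mulVec (w x))
    (F : (Fin n → ℝ) → (Fin n → ℝ))
    (hF : ∀ x, F x = A_G.mulVec x + B_G.mulVec (u x))
    (vlo vhi α β : Fin p → ℝ)
    (hvlo : ∀ i, vlo i ≤ 0) (hvhi : ∀ i, 0 ≤ vhi i) (hαβ : ∀ i, α i ≤ β i)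
    -- (a) activation input bounds hold on the state constraint set X
    (ha : ∀ x : Fin n → ℝ, (∀ i, |H i ⬝ᵥ x| ≤ h i) →
      ∀ i, vlo i ≤ (Nvx.mulVec x + Nvw.mulVec (w x)) i ∧
           (Nvx.mulVec x + Nvw.mulVec (w x)) i ≤ vhi i)
    -- (b) local sector condition for the nonlinearity
    (hb : ∀ v : Fin p → ℝ, (∀ i, vlo i ≤ v i ∧ v i ≤ vhi i) →
      ∀ i, 0 ≤ (φ v i - α i * v i) * (β i * v i - φ v i))
    (P : Matrix (Fin n) (Fin n) ℝ) (hP : P.PosDef)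
    (lam : Fin p → ℝ) (hlam : ∀ i, 0 ≤ lam i)
    -- (c) the Lyapunov LMI is negative definite
    (hc : ∀ z : Fin n ⊕ Fin p → ℝ, z ≠ 0 →
      z ⬝ᵥ ((Matrix.fromBlocks 1 0 Nux Nuw : Matrix (Fin n ⊕ Fin m) (Fin n ⊕ Fin p) ℝ)ᵀ *
              (Matrix.fromBlocks (A_Gᵀ * P * A_G - P) (A_Gᵀ * P * B_G)
                (B_Gᵀ * P * A_G) (B_Gᵀ * P * B_G)) *
              (Matrix.fromBlocks 1 0 Nux Nuw : Matrix (Fin n ⊕ Fin m) (Fin n ⊕ Fin p) ℝ) +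
            (Matrix.fromBlocks Nvx Nvw 0 1 : Matrix (Fin p ⊕ Fin p) (Fin n ⊕ Fin p) ℝ)ᵀ *
              (Matrix.fromBlocks
                ((-2 : ℝ) • (Matrix.diagonal α * Matrix.diagonal β * Matrix.diagonal lam))
                ((Matrix.diagonal α + Matrix.diagonal β) * Matrix.diagonal lam)
                ((Matrix.diagonal α + Matrix.diagonal β) * Matrix.diagonal lam)
                ((-2 : ℝ) • Matrix.diagonal lam)) *
              (Matrix.fromBlocks Nvx Nvw 0 1 : Matrix (Fin p ⊕ Fin p) (Fin n ⊕ Fin p) ℝ)).mulVec z < 0)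
    -- (d) the set-containment LMIs
    (hd : ∀ i, (Matrix.fromBlocks (!![(h i) ^ 2])
        (Matrix.of fun (_ : Fin 1) j => H i j)
        (Matrix.of fun j (_ : Fin 1) => H i j) P).PosSemidef) :
    -- conclusion: safety of every trajectory starting in E(P)
    ∀ x₀ : Fin n → ℝ, x₀ ⬝ᵥ P.mulVec x₀ ≤ 1 →
      ∀ k : ℕ, ∀ i, |H i ⬝ᵥ (F^[k] x₀)| ≤ h i :=
  stmt_9_general n m p nX A_G B_G H h hh Nux Nuw Nvx Nvw φ w hw u hu F hF vlo vhi α β ha hb P lam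
    hlam hc hd
end

section
/- Consider the plant x(k+1) = A_G x(k) + B_G u(k) with A_G ∈ ℝ^{n×n}, B_G ∈ ℝ^{n×m}, and the polytopic state constraint set X = {x ∈ ℝⁿ : |H_iᵀ x| ≤ h_i for i = 1,…,n_X} with h_i ≥ 0. Let the controller be given in loop-transformed LFT form by matrices Ñ_ux ∈ ℝ^{m×n}, Ñ_uz ∈ ℝ^{m×p}, Ñ_vx ∈ ℝ^{p×n}, Ñ_vz ∈ ℝ^{p×p}, a nonlinearity φ̃ : ℝᵖ → ℝᵖ with φ̃(0) = 0, and a map z : ℝⁿ → ℝᵖ satisfying z(x) = φ̃(Ñ_vx x + Ñ_vz z(x)) for all x and z(0) = 0; the control is u(x) = Ñ_ux x + Ñ_uz z(x) and the closed-loop map is F(x) = A_G x + B_G u(x). Suppose there are vectors v̲ ≤ 0 ≤ v̄ in ℝᵖ such that: (a) for every x ∈ X, the vector v(x) := Ñ_vx x + Ñ_vz z(x) satisfies v̲ ≤ v(x) ≤ v̄; (b) for every v with v̲ ≤ v ≤ v̄ and every i, |φ̃(v)_i| ≤ |v_i|. Suppose further there exist a symmetric positive definite P ∈ ℝ^{n×n}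 and λ ∈ ℝᵖ with λ_i > 0 for all i such that, with Λ = diag(λ), R_V = [[I_n, 0], [Ñ_ux, Ñ_uz]], R_φ = [[Ñ_vx, Ñ_vz], [0, I_p]]: (c) R_Vᵀ [[A_GᵀPA_G − P, A_GᵀPB_G], [B_GᵀPA_G, B_GᵀPB_G]] R_V + R_φᵀ · diag(Λ, −Λ) · R_φ is negative definite; (d) for each i = 1,…,n_X, the block matrix [[h_i², H_iᵀ], [H_i, P]] is positive semidefinite. Then E(P) ⊆ X, and for every x₀ ∈ E(P) the trajectory x(0) = x₀, x(k+1) = F(x(k)) satisfies x(k) ∈ E(P) for all k ≥ 0 and x(k) → 0 as k → ∞. -/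
/-!
With V(x) = xᵀPx and v = Ñ_vx x + Ñ_vz z(x), the quadratic form of the LMI (c) at (x, z(x)) equals
V(F x) − V(x) + (vᵀΛv − z(x)ᵀΛz(x)). On E(P) ⊆ X, the local sector condition makes the bracket
nonnegative, so (S-procedure) V(F x) ≤ V(x) − ε‖x‖² with ε > 0 from compactness of the unit sphere.
Hence E(P) is invariant, ∑ ε‖x(k)‖² ≤ V(x₀) telescopes, and x(k) → 0. The containment E(P) ⊆ X is
the discriminant of the nonnegative quadratic t ↦ (t, x)ᵀ [[h², Hᵀ], [H, P]] (t, x).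
-/

open Matrix Filter

lemma exists_le_neg_mul_norm_sq_of_neg {E : Type*} [NormedAddCommGroup E] [NormedSpace ℝ E]
    [ProperSpace E] {f : E → ℝ} (hf : Continuous f) (hsmul : ∀ (c : ℝ) w, f (c • w) = c ^ 2 * f w)
    (hneg : ∀ w, w ≠ 0 → f w < 0) :
    ∃ ε > 0, ∀ w, f w ≤ -ε * ‖w‖ ^ 2 := by
  have hf0 : f 0 = 0 := by simpa using hsmul 0 0
  rcases subsingleton_or_nontrivial E with hE | hE
  · exact ⟨1, one_pos, fun w => by simp [Subsingleton.elim w 0, hf0]⟩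
  obtain ⟨w₀, hw₀, hmax⟩ := (isCompact_sphere (0 : E) 1).exists_isMaxOn
    (NormedSpace.sphere_nonempty.2 zero_le_one) hf.continuousOn
  have hw₀ : ‖w₀‖ = 1 := by simpa using hw₀
  refine ⟨-f w₀, neg_pos.2 (hneg w₀ (norm_ne_zero_iff.1 (by simp [hw₀]))), fun w => ?_⟩
  rcases eq_or_ne w 0 with rfl | hw
  · simp [hf0]
  have hunit : ‖w‖⁻¹ • w ∈ Metric.sphere (0 : E) 1 := by
    simp [norm_smul, norm_ne_zero_iff.2 hw]
  calc f w = ‖w‖ ^ 2 * f (‖w‖⁻¹ • w) := by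
        rw [hsmul, ← mul_assoc, ← mul_pow, mul_inv_cancel₀ (norm_ne_zero_iff.2 hw), one_pow,
          one_mul]
    _ ≤ ‖w‖ ^ 2 * f w₀ := mul_le_mul_of_nonneg_left (hmax hunit) (by positivity)
    _ = -(-f w₀) * ‖w‖ ^ 2 := by ring

lemma Matrix.exists_dotProduct_mulVec_le_neg_mul_norm_sq {ι : Type*} [Fintype ι]
    (M : Matrix ι ι ℝ) (hM : ∀ w : ι → ℝ, w ≠ 0 → w ⬝ᵥ M *ᵥ w < 0) :
    ∃ ε > 0, ∀ w : ι → ℝ, w ⬝ᵥ M *ᵥ w ≤ -ε * ‖w‖ ^ 2 :=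
  exists_le_neg_mul_norm_sq_of_neg (by fun_prop)
    (fun c w => by rw [mulVec_smul, smul_dotProduct, dotProduct_smul, smul_smul, smul_eq_mul, sq])
    hM

lemma norm_le_norm_sumElim {ι κ : Type*} [Fintype ι] [Fintype κ] (x : ι → ℝ) (y : κ → ℝ) :
    ‖x‖ ≤ ‖(x ⊕ᵥ y : ι ⊕ κ → ℝ)‖ :=
  (pi_norm_le_iff_of_nonneg (norm_nonneg _)).2 fun i => norm_le_pi_norm (x ⊕ᵥ y) (Sum.inl i)

lemma abs_dotProduct_le_of_posSemidef_fromBlocks {ι : Type*} [Fintype ι] {c : ℝ} (hc : 0 ≤ c)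
    {a : ι → ℝ} {P : Matrix ι ι ℝ}
    (hPSD : (fromBlocks !![c ^ 2] (of fun (_ : Fin 1) j => a j) (of fun j (_ : Fin 1) => a j)
      P).PosSemidef)
    {x : ι → ℝ} (hx : x ⬝ᵥ P *ᵥ x ≤ 1) :
    |a ⬝ᵥ x| ≤ c := by
  have hquad : ∀ t : ℝ, 0 ≤ c ^ 2 * (t * t) + 2 * (a ⬝ᵥ x) * t + x ⬝ᵥ P *ᵥ x := by
    intro t
    have h := hPSD.dotProduct_mulVec_nonneg ((fun _ : Fin 1 => t) ⊕ᵥ x)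
    simp only [star_trivial, fromBlocks_mulVec, Sum.elim_comp_inl, Sum.elim_comp_inr,
      sumElim_dotProduct_sumElim, dotProduct_add] at h
    simp only [dotProduct, mulVec, Fin.sum_univ_one, of_apply, cons_val', cons_val_fin_one,
      empty_val'] at h
    have hcross : ∑ i, x i * (a i * t) = t * ∑ i, a i * x i := by
      rw [Finset.mul_sum]
      exact Finset.sum_congr rfl fun i _ => by ring
    simp only [dotProduct, mulVec]
    linarith
  have hdisc := discrim_le_zero hquad
  rw [discrim] at hdisc
  exact abs_le_of_sq_le_sq (by nlinarith) hc

lemma dotProduct_diagonal_mulVec_le {ι : Type*} [Fintype ι] [DecidableEq ι] {lam z v : ι → ℝ}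
    (hlam : ∀ i, 0 ≤ lam i) (hzv : ∀ i, |z i| ≤ |v i|) :
    z ⬝ᵥ diagonal lam *ᵥ z ≤ v ⬝ᵥ diagonal lam *ᵥ v := by
  simp only [dotProduct, mulVec_diagonal]
  refine Finset.sum_le_sum fun i _ => ?_
  have hsq : z i * z i ≤ v i * v i := by
    simpa only [abs_mul_abs_self] using mul_self_le_mul_self (abs_nonneg (z i)) (hzv i)
  nlinarith [hlam i]

section LoopTransformedLMI

variable {n m p : Type*} [Fintype n] [Fintype m] [Fintype p] [DecidableEq n] [DecidableEq p]

def loopTransformedLMI (A : Matrix n n ℝ) (B : Matrix n m ℝ) (Nux : Matrix m n ℝ)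
    (Nuz : Matrix m p ℝ) (Nvx : Matrix p n ℝ) (Nvz : Matrix p p ℝ) (P : Matrix n n ℝ)
    (lam : p → ℝ) : Matrix (n ⊕ p) (n ⊕ p) ℝ :=
  (fromBlocks (1 : Matrix n n ℝ) 0 Nux Nuz)ᵀ *
      fromBlocks (Aᵀ * P * A - P) (Aᵀ * P * B) (Bᵀ * P * A) (Bᵀ * P * B) *
      fromBlocks (1 : Matrix n n ℝ) 0 Nux Nuz +
    (fromBlocks Nvx Nvz 0 (1 : Matrix p p ℝ))ᵀ *
      fromBlocks (diagonal lam) 0 0 (-diagonal lam) *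
      fromBlocks Nvx Nvz 0 (1 : Matrix p p ℝ)

lemma loopTransformedLMI_quadForm (A : Matrix n n ℝ) (B : Matrix n m ℝ) (Nux : Matrix m n ℝ)
    (Nuz : Matrix m p ℝ) (Nvx : Matrix p n ℝ) (Nvz : Matrix p p ℝ) (P : Matrix n n ℝ)
    (lam : p → ℝ) (x : n → ℝ) (z : p → ℝ) :
    (x ⊕ᵥ z) ⬝ᵥ loopTransformedLMI A B Nux Nuz Nvx Nvz P lam *ᵥ (x ⊕ᵥ z) =
      (A *ᵥ x + B *ᵥ (Nux *ᵥ x + Nuz *ᵥ z)) ⬝ᵥ P *ᵥ (A *ᵥ x + B *ᵥ (Nux *ᵥ x + Nuz *ᵥ z))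
        - x ⬝ᵥ P *ᵥ x
        + ((Nvx *ᵥ x + Nvz *ᵥ z) ⬝ᵥ diagonal lam *ᵥ (Nvx *ᵥ x + Nvz *ᵥ z)
          - z ⬝ᵥ diagonal lam *ᵥ z) := by
  simp only [loopTransformedLMI, add_mulVec, dotProduct_add, ← mulVec_mulVec,
    dotProduct_mulVec _ (_ᵀ), vecMul_transpose, fromBlocks_mulVec, Sum.elim_comp_inl,
    Sum.elim_comp_inr, one_mulVec, zero_mulVec, neg_mulVec, sub_mulVec, add_zero, zero_add,
    sumElim_dotProduct_sumElim, dotProduct_sub, dotProduct_neg, add_dotProduct, mulVec_add]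
  ring

lemma loopTransformedLMI_lyapunov_decrease {A : Matrix n n ℝ} {B : Matrix n m ℝ}
    {Nux : Matrix m n ℝ} {Nuz : Matrix m p ℝ} {Nvx : Matrix p n ℝ} {Nvz : Matrix p p ℝ}
    {P : Matrix n n ℝ} {lam : p → ℝ} {ε : ℝ} (hε : 0 ≤ ε)
    (hLMI : ∀ w, w ⬝ᵥ loopTransformedLMI A B Nux Nuz Nvx Nvz P lam *ᵥ w ≤ -ε * ‖w‖ ^ 2)
    (hlam : ∀ i, 0 ≤ lam i) {x : n → ℝ} {z : p → ℝ}
    (hsector : ∀ i, |z i| ≤ |(Nvx *ᵥ x + Nvz *ᵥ z) i|) :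
    (A *ᵥ x + B *ᵥ (Nux *ᵥ x + Nuz *ᵥ z)) ⬝ᵥ P *ᵥ (A *ᵥ x + B *ᵥ (Nux *ᵥ x + Nuz *ᵥ z)) ≤
      x ⬝ᵥ P *ᵥ x - ε * ‖x‖ ^ 2 := by
  have hS := dotProduct_diagonal_mulVec_le hlam hsector
  have hw := hLMI (x ⊕ᵥ z)
  rw [loopTransformedLMI_quadForm] at hw
  have hnorm : ε * ‖x‖ ^ 2 ≤ ε * ‖(x ⊕ᵥ z : n ⊕ p → ℝ)‖ ^ 2 := by
    gcongr
    exact norm_le_norm_sumElim x z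
  linarith

end LoopTransformedLMI

lemma tendsto_zero_of_lyapunov_decrease {E : Type*} [SeminormedAddGroup E] {x : ℕ → E}
    {V : ℕ → ℝ} {ε : ℝ} (hε : 0 < ε) (hV : ∀ k, 0 ≤ V k)
    (hdec : ∀ k, V (k + 1) ≤ V k - ε * ‖x k‖ ^ 2) :
    Tendsto x atTop (nhds 0) := by
  have hsum : Summable fun k => ε * ‖x k‖ ^ 2 := by
    refine summable_of_sum_range_le (c := V 0) (fun k => by positivity) fun N => ?_
    calc ∑ k ∈ Finset.range N, ε * ‖x k‖ ^ 2 ≤ ∑ k ∈ Finset.range N, (V k - V (k + 1)) :=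
          Finset.sum_le_sum fun k _ => by linarith [hdec k]
      _ = V 0 - V N := Finset.sum_range_sub' V N
      _ ≤ V 0 := by linarith [hV N]
  have hsq : Tendsto (fun k => ‖x k‖ ^ 2) atTop (nhds 0) :=
    ((summable_mul_left_iff hε.ne').1 hsum).tendsto_atTop_zero
  refine tendsto_zero_iff_norm_tendsto_zero.2 ?_
  simpa [Function.comp_def, Real.sqrt_sq (norm_nonneg _)] using
    (Real.continuous_sqrt.tendsto 0).comp hsq

theorem stmt_15_general (n m p nX : ℕ)
    (A_G : Matrix (Fin n) (Fin n) ℝ) (B_G : Matrix (Fin n) (Fin m) ℝ)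
    (H : Fin nX → Fin n → ℝ) (h : Fin nX → ℝ) (hh : ∀ i, 0 ≤ h i)
    (Nux : Matrix (Fin m) (Fin n) ℝ) (Nuz : Matrix (Fin m) (Fin p) ℝ)
    (Nvx : Matrix (Fin p) (Fin n) ℝ) (Nvz : Matrix (Fin p) (Fin p) ℝ)
    (φ : (Fin p → ℝ) → (Fin p → ℝ))
    (z : (Fin n → ℝ) → (Fin p → ℝ))
    (hz : ∀ x, z x = φ (Nvx.mulVec x + Nvz.mulVec (z x)))
    (u : (Fin n → ℝ) → (Fin m → ℝ))
    (hu : ∀ x, u x = Nux.mulVec x + Nuz.mulVec (z x))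
    (F : (Fin n → ℝ) → (Fin n → ℝ))
    (hF : ∀ x, F x = A_G.mulVec x + B_G.mulVec (u x))
    (vlo vhi : Fin p → ℝ)
    -- (a) activation input bounds hold on the state constraint set X
    (ha : ∀ x : Fin n → ℝ, (∀ i, |H i ⬝ᵥ x| ≤ h i) →
      ∀ i, vlo i ≤ (Nvx.mulVec x + Nvz.mulVec (z x)) i ∧
           (Nvx.mulVec x + Nvz.mulVec (z x)) i ≤ vhi i)
    -- (b) normalized local sector [−1, 1] for the transformed nonlinearity
    (hb : ∀ v : Fin p → ℝ, (∀ i, vlo i ≤ v i ∧ v i ≤ vhi i) →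
      ∀ i, |φ v i| ≤ |v i|)
    (P : Matrix (Fin n) (Fin n) ℝ) (hP : P.PosDef)
    (lam : Fin p → ℝ) (hlam : ∀ i, 0 < lam i)
    -- (c) the loop-transformed Lyapunov LMI is negative definite
    (hc : ∀ w : Fin n ⊕ Fin p → ℝ, w ≠ 0 →
      w ⬝ᵥ ((Matrix.fromBlocks (1 : Matrix (Fin n) (Fin n) ℝ) 0 Nux Nuz)ᵀ *
              (Matrix.fromBlocks (A_Gᵀ * P * A_G - P) (A_Gᵀ * P * B_G)
                (B_Gᵀ * P * A_G) (B_Gᵀ * P * B_G)) *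
              (Matrix.fromBlocks (1 : Matrix (Fin n) (Fin n) ℝ) 0 Nux Nuz) +
            (Matrix.fromBlocks Nvx Nvz 0 (1 : Matrix (Fin p) (Fin p) ℝ))ᵀ *
              (Matrix.fromBlocks (Matrix.diagonal lam) 0 0 (-(Matrix.diagonal lam))) *
              (Matrix.fromBlocks Nvx Nvz 0 (1 : Matrix (Fin p) (Fin p) ℝ))).mulVec w < 0)
    -- (d) the set-containment LMIs
    (hd : ∀ i, (Matrix.fromBlocks (!![(h i) ^ 2])
        (Matrix.of fun (_ : Fin 1) j => H i j)
        (Matrix.of fun j (_ : Fin 1) => H i j) P).PosSemidef) :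
    -- conclusion: E(P) ⊆ X, invariance of E(P), and convergence to 0
    (∀ x : Fin n → ℝ, x ⬝ᵥ P.mulVec x ≤ 1 → ∀ i, |H i ⬝ᵥ x| ≤ h i) ∧
    ∀ x₀ : Fin n → ℝ, x₀ ⬝ᵥ P.mulVec x₀ ≤ 1 →
      (∀ k : ℕ, (F^[k] x₀) ⬝ᵥ P.mulVec (F^[k] x₀) ≤ 1) ∧
      Tendsto (fun k : ℕ => F^[k] x₀) atTop (nhds 0) := by
  have hX : ∀ x : Fin n → ℝ, x ⬝ᵥ P *ᵥ x ≤ 1 → ∀ i, |H i ⬝ᵥ x| ≤ h i :=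
    fun x hx i => abs_dotProduct_le_of_posSemidef_fromBlocks (hh i) (hd i) hx
  obtain ⟨ε, hε, hLMI⟩ := exists_dotProduct_mulVec_le_neg_mul_norm_sq
    (loopTransformedLMI A_G B_G Nux Nuz Nvx Nvz P lam) hc
  have hdec : ∀ x, x ⬝ᵥ P *ᵥ x ≤ 1 → F x ⬝ᵥ P *ᵥ F x ≤ x ⬝ᵥ P *ᵥ x - ε * ‖x‖ ^ 2 := by
    intro x hx
    have hsector : ∀ i, |z x i| ≤ |(Nvx *ᵥ x + Nvz *ᵥ z x) i| := by
      intro i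
      have hφ := hb _ (ha x (hX x hx)) i
      rwa [← hz x] at hφ
    rw [hF, hu]
    exact loopTransformedLMI_lyapunov_decrease hε.le hLMI (fun i => (hlam i).le) hsector
  have hV : ∀ x : Fin n → ℝ, 0 ≤ x ⬝ᵥ P *ᵥ x := fun x => by
    simpa using hP.posSemidef.dotProduct_mulVec_nonneg x
  have hinv : Set.MapsTo F {x | x ⬝ᵥ P *ᵥ x ≤ 1} {x | x ⬝ᵥ P *ᵥ x ≤ 1} := fun x hx =>
    (hdec x hx).trans ((sub_le_self _ (by positivity)).trans hx)
  refine ⟨hX, fun x₀ hx₀ => ⟨fun k => hinv.iterate k hx₀, ?_⟩⟩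
  refine tendsto_zero_of_lyapunov_decrease hε (fun k => hV (F^[k] x₀)) fun k => ?_
  rw [Function.iterate_succ_apply']
  exact hdec _ (hinv.iterate k hx₀)

/-- Closed-loop stability and safety for the loop-transformed NN controller:
the normalized sector [−1, 1], the Lyapunov LMI with diag(Λ, −Λ), and the
set-containment LMIs certify that E(P) ⊆ X is an invariant inner-approximation
of the region of attraction. -/
theorem stmt_15 (n m p nX : ℕ)
    (A_G : Matrix (Fin n) (Fin n) ℝ) (B_G : Matrix (Fin n) (Fin m) ℝ)
    (H : Fin nX → Fin n → ℝ) (h : Fin nX → ℝ) (hh : ∀ i, 0 ≤ h i)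
    (Nux : Matrix (Fin m) (Fin n) ℝ) (Nuz : Matrix (Fin m) (Fin p) ℝ)
    (Nvx : Matrix (Fin p) (Fin n) ℝ) (Nvz : Matrix (Fin p) (Fin p) ℝ)
    (φ : (Fin p → ℝ) → (Fin p → ℝ)) (hφ0 : φ 0 = 0)
    (z : (Fin n → ℝ) → (Fin p → ℝ))
    (hz : ∀ x, z x = φ (Nvx.mulVec x + Nvz.mulVec (z x))) (hz0 : z 0 = 0)
    (u : (Fin n → ℝ) → (Fin m → ℝ))
    (hu : ∀ x, u x = Nux.mulVec x + Nuz.mulVec (z x))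
    (F : (Fin n → ℝ) → (Fin n → ℝ))
    (hF : ∀ x, F x = A_G.mulVec x + B_G.mulVec (u x))
    (vlo vhi : Fin p → ℝ)
    (hvlo : ∀ i, vlo i ≤ 0) (hvhi : ∀ i, 0 ≤ vhi i)
    -- (a) activation input bounds hold on the state constraint set X
    (ha : ∀ x : Fin n → ℝ, (∀ i, |H i ⬝ᵥ x| ≤ h i) →
      ∀ i, vlo i ≤ (Nvx.mulVec x + Nvz.mulVec (z x)) i ∧
           (Nvx.mulVec x + Nvz.mulVec (z x)) i ≤ vhi i)
    -- (b) normalized local sector [−1, 1] for the transformed nonlinearity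
    (hb : ∀ v : Fin p → ℝ, (∀ i, vlo i ≤ v i ∧ v i ≤ vhi i) →
      ∀ i, |φ v i| ≤ |v i|)
    (P : Matrix (Fin n) (Fin n) ℝ) (hP : P.PosDef)
    (lam : Fin p → ℝ) (hlam : ∀ i, 0 < lam i)
    -- (c) the loop-transformed Lyapunov LMI is negative definite
    (hc : ∀ w : Fin n ⊕ Fin p → ℝ, w ≠ 0 →
      w ⬝ᵥ ((Matrix.fromBlocks (1 : Matrix (Fin n) (Fin n) ℝ) 0 Nux Nuz)ᵀ *
              (Matrix.fromBlocks (A_Gᵀ * P * A_G - P) (A_Gᵀ * P * B_G)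
                (B_Gᵀ * P * A_G) (B_Gᵀ * P * B_G)) *
              (Matrix.fromBlocks (1 : Matrix (Fin n) (Fin n) ℝ) 0 Nux Nuz) +
            (Matrix.fromBlocks Nvx Nvz 0 (1 : Matrix (Fin p) (Fin p) ℝ))ᵀ *
              (Matrix.fromBlocks (Matrix.diagonal lam) 0 0 (-(Matrix.diagonal lam))) *
              (Matrix.fromBlocks Nvx Nvz 0 (1 : Matrix (Fin p) (Fin p) ℝ))).mulVec w < 0)
    -- (d) the set-containment LMIs
    (hd : ∀ i, (Matrix.fromBlocks (!![(h i) ^ 2])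
        (Matrix.of fun (_ : Fin 1) j => H i j)
        (Matrix.of fun j (_ : Fin 1) => H i j) P).PosSemidef) :
    -- conclusion: E(P) ⊆ X, invariance of E(P), and convergence to 0
    (∀ x : Fin n → ℝ, x ⬝ᵥ P.mulVec x ≤ 1 → ∀ i, |H i ⬝ᵥ x| ≤ h i) ∧
    ∀ x₀ : Fin n → ℝ, x₀ ⬝ᵥ P.mulVec x₀ ≤ 1 →
      (∀ k : ℕ, (F^[k] x₀) ⬝ᵥ P.mulVec (F^[k] x₀) ≤ 1) ∧
      Tendsto (fun k : ℕ => F^[k] x₀) atTop (nhds 0) :=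
  stmt_15_general n m p nX A_G B_G H h hh Nux Nuz Nvx Nvz φ z hz u hu F hF vlo vhi ha hb P hP lam
    hlam hc hd
end
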